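/- arXiv:2211.09434 — 4 statements merged into one kernel-verified Lean document; each statement's English description precedes it below -/
import Mathlib

section
/- Let n = s and let M be a symmetric matrix in ℝ^{(n+s)×(n+s)} acting on vectors (q,p) with q ∈ ℝ^n, p ∈ ℝ^s, satisfying [0; I_s]ᵀ M [0; I_s] ⪯ 0 and [I_n; diag(δʲ)]ᵀ M [I_n; diag(δʲ)] ⪰ 0 for vertices δ¹,…,δᵐ ∈ ℝ^n. Then for every δ in the convex hull of {δ¹,…,δᵐ} and every q ∈ ℝ^n, the vector y = (q, diag(δ) q) satisfies yᵀ M y ≥ 0. -/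
open Matrix

lemma symm_dot {k : Type*} [Fintype k] [DecidableEq k]
    (M : Matrix k k ℝ) (hM : M.IsSymm) (x y : k → ℝ) :
    x ⬝ᵥ M.mulVec y = y ⬝ᵥ M.mulVec x := by
  rw [dotProduct_mulVec, ← mulVec_transpose, hM.eq, dotProduct_comm]

lemma expand_quad {k : Type*} [Fintype k] [DecidableEq k]
    (M : Matrix k k ℝ) (hM : M.IsSymm) (x y : k → ℝ) (a b : ℝ) :
    (a • x + b • y) ⬝ᵥ M.mulVec (a • x + b • y)
      = a^2 * (x ⬝ᵥ M.mulVec x) + 2*a*b * (x ⬝ᵥ M.mulVec y)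
        + b^2 * (y ⬝ᵥ M.mulVec y) := by
  simp only [mulVec_add, mulVec_smul, dotProduct_add, add_dotProduct,
    dotProduct_smul, smul_dotProduct, smul_eq_mul]
  rw [symm_dot M hM y x]
  ring

/-- Pointwise IQC for time-varying parametric uncertainties (Class 4 multipliers):
if `[0;I]ᵀ M [0;I] ⪯ 0` and `[I;diag(δʲ)]ᵀ M [I;diag(δʲ)] ⪰ 0` at each vertex,
then for every `δ` in the convex hull of the vertices and every `q`,
the vector `y = (q, diag(δ) q)` satisfies `yᵀ M y ≥ 0`. -/
theorem pointwise_IQC_parametric_tv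
    {n m : ℕ} (M : Matrix (Fin n ⊕ Fin n) (Fin n ⊕ Fin n) ℝ) (hM : M.IsSymm)
    (δv : Fin m → (Fin n → ℝ))
    (hlr : ∀ p : Fin n → ℝ,
      (Sum.elim (0 : Fin n → ℝ) p) ⬝ᵥ M.mulVec (Sum.elim (0 : Fin n → ℝ) p) ≤ 0)
    (hvert : ∀ (j : Fin m) (q : Fin n → ℝ),
      0 ≤ (Sum.elim q (fun i => δv j i * q i)) ⬝ᵥ
            M.mulVec (Sum.elim q (fun i => δv j i * q i))) :
    ∀ δ ∈ convexHull ℝ (Set.range δv), ∀ q : Fin n → ℝ,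
      0 ≤ (Sum.elim q (fun i => δ i * q i)) ⬝ᵥ
            M.mulVec (Sum.elim q (fun i => δ i * q i)) := by
  set S : Set (Fin n → ℝ) := {δ | ∀ q : Fin n → ℝ,
      0 ≤ (Sum.elim q (fun i => δ i * q i)) ⬝ᵥ
            M.mulVec (Sum.elim q (fun i => δ i * q i))} with hS
  have hsub : Set.range δv ⊆ S := by
    rintro _ ⟨j, rfl⟩ q
    exact hvert j q
  have hconv : Convex ℝ S := by
    intro δ₁ h₁ δ₂ h₂ a b ha hb hab
    intro q
    set y₁ : (Fin n ⊕ Fin n) → ℝ := Sum.elim q (fun i => δ₁ i * q i) with hy₁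
    set y₂ : (Fin n ⊕ Fin n) → ℝ := Sum.elim q (fun i => δ₂ i * q i) with hy₂
    have hcomb : (Sum.elim q (fun i => (a • δ₁ + b • δ₂) i * q i))
        = a • y₁ + b • y₂ := by
      funext i
      cases i with
      | inl i => simp [hy₁, hy₂]; linear_combination (- q i) * hab
      | inr i => simp [hy₁, hy₂]; ring
    rw [hcomb, expand_quad M hM y₁ y₂ a b]
    have hdiff : (Sum.elim (0 : Fin n → ℝ) (fun i => δ₁ i * q i - δ₂ i * q i))
        = (1:ℝ) • y₁ + (-1:ℝ) • y₂ := by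
      funext i
      cases i with
      | inl i => simp [hy₁, hy₂]
      | inr i => simp [hy₁, hy₂]; ring
    have hD := hlr (fun i => δ₁ i * q i - δ₂ i * q i)
    rw [hdiff, expand_quad M hM y₁ y₂ 1 (-1)] at hD
    have h1 := h₁ q
    have h2 := h₂ q
    rw [← hy₁] at h1
    rw [← hy₂] at h2
    nlinarith [mul_nonneg ha hb, h1, h2, hD]
  intro δ hδ
  exact convexHull_min hsub hconv hδ
end

section
/- Let A ∈ ℝ^{n×n}, B ∈ ℝ^{n×m}, C ∈ ℝ^{s×n}, D ∈ ℝ^{s×m}, Y ∈ 𝕊^n symmetric, M ∈ 𝕊^s, ρ ∈ (0,1). Suppose [I 0; A B; C D]ᵀ diag(−ρY, Y, M) [I 0; A B; C D] ⪰ 0, i.e., for all (x,u), −ρ xᵀYx + (Ax+Bu)ᵀ Y (Ax+Bu) + (Cx+Du)ᵀ M (Cx+Du) ≥ 0. Then for any trajectory x_{k+1} = A x_k + B u_k with x_0 = 0 and outputs y_k = C x_k + D u_k, it holds for all t: x_{t+1}ᵀ Y x_{t+1} + ∑_{k=0}^{t} ρ^{t−k} y_kᵀ M y_k ≥ 0.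 -/
open Matrix Finset

/-- From the dissipation inequality with rate `ρ` and storage `Y` (a quadratic
matrix inequality `⪰ 0`), every trajectory of `x_{k+1} = A x_k + B u_k`, `x_0 = 0`,
with outputs `y_k = C x_k + D u_k` satisfies the ρ-hard IQC with terminal cost `Y`:
`x_{t+1}ᵀ Y x_{t+1} + ∑_{k=0}^{t} ρ^{t−k} y_kᵀ M y_k ≥ 0`. -/
theorem rho_hard_IQC_from_dissipation_ge
    {n m s : ℕ} (A : Matrix (Fin n) (Fin n) ℝ) (B : Matrix (Fin n) (Fin m) ℝ)
    (C : Matrix (Fin s) (Fin n) ℝ) (D : Matrix (Fin s) (Fin m) ℝ)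
    (Y : Matrix (Fin n) (Fin n) ℝ) (hY : Y.IsSymm)
    (M : Matrix (Fin s) (Fin s) ℝ) (hM : M.IsSymm)
    (ρ : ℝ) (hρ0 : 0 < ρ) (hρ1 : ρ < 1)
    (hdiss : ∀ (x : Fin n → ℝ) (u : Fin m → ℝ),
      0 ≤ -ρ * (x ⬝ᵥ Y.mulVec x)
          + (A.mulVec x + B.mulVec u) ⬝ᵥ Y.mulVec (A.mulVec x + B.mulVec u)
          + (C.mulVec x + D.mulVec u) ⬝ᵥ M.mulVec (C.mulVec x + D.mulVec u))
    (x : ℕ → (Fin n → ℝ)) (u : ℕ → (Fin m → ℝ)) (y : ℕ → (Fin s → ℝ))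
    (hx0 : x 0 = 0)
    (hdyn : ∀ k, x (k + 1) = A.mulVec (x k) + B.mulVec (u k))
    (hout : ∀ k, y k = C.mulVec (x k) + D.mulVec (u k)) :
    ∀ t : ℕ, 0 ≤ x (t + 1) ⬝ᵥ Y.mulVec (x (t + 1))
        + ∑ k ∈ Finset.range (t + 1), ρ ^ (t - k) * (y k ⬝ᵥ M.mulVec (y k)) := by
  have key : ∀ k, x (k+1) ⬝ᵥ Y.mulVec (x (k+1)) + y k ⬝ᵥ M.mulVec (y k)
      ≥ ρ * (x k ⬝ᵥ Y.mulVec (x k)) := by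
    intro k
    have h := hdiss (x k) (u k)
    rw [← hdyn k, ← hout k] at h
    linarith
  intro t
  induction t with
  | zero =>
    have h := key 0
    have h0 : x 0 ⬝ᵥ Y.mulVec (x 0) = 0 := by
      rw [hx0]; simp [Matrix.mulVec_zero]
    simp only [zero_add, Finset.sum_range_one, Nat.zero_sub, pow_zero, one_mul]
    rw [zero_add, h0, mul_zero] at h
    linarith
  | succ t ih =>
    have h := key (t+1)
    have hsum : ∑ k ∈ Finset.range (t + 2), ρ ^ (t + 1 - k) * (y k ⬝ᵥ M.mulVec (y k))
        = ρ * (∑ k ∈ Finset.range (t + 1), ρ ^ (t - k) * (y k ⬝ᵥ M.mulVec (y k)))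
          + y (t+1) ⬝ᵥ M.mulVec (y (t+1)) := by
      rw [Finset.sum_range_succ, Finset.mul_sum]
      congr 1
      · apply Finset.sum_congr rfl
        intro k hk
        have hk' : k ≤ t := Nat.lt_succ_iff.mp (Finset.mem_range.mp hk)
        rw [← mul_assoc, ← pow_succ']
        congr 2
        omega
      · rw [Nat.sub_self, pow_zero, one_mul]
    rw [hsum]
    nlinarith [mul_le_mul_of_nonneg_left ih (le_of_lt hρ0)]
end

section
/- Suppose sequences χ : ℕ → ℝ^n (χ_0 = 0), z : ℕ → ℝ^p, w : ℕ → ℝ^m and constants ρ ∈ (0,1), γ ≥ μ ≥ 0, γ > 0, W ≥ 0 with ‖w_k‖ ≤ W satisfy: (i) χ_{k+1}ᵀPχ_{k+1} − ρχ_kᵀPχ_k − μ‖w_k‖² ≤ 0 for all k, and (ii) −ρχ_tᵀPχ_t + (ρ/(γ(1−ρ)))‖z_t‖² − (ρ(γ−μ)/(1−ρ))‖w_t‖² ≤ 0 for all t. Then ‖z_t‖ ≤ γ W for all t ∈ ℕ. -/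
open Matrix

/-- Peak-to-peak gain bound (Theorem 1 with trivial IQC terms): the exponential
dissipation inequality (i) together with the supply-rate inequality (ii) implies
`‖z_t‖ ≤ γ W` for all `t`. -/
theorem peak_to_peak_gain_bound
    {n p m : ℕ} (χ : ℕ → (Fin n → ℝ)) (hχ0 : χ 0 = 0)
    (z : ℕ → EuclideanSpace ℝ (Fin p)) (w : ℕ → EuclideanSpace ℝ (Fin m))
    (P : Matrix (Fin n) (Fin n) ℝ) (hP : P.IsSymm)
    (ρ γ μ W : ℝ) (hρ0 : 0 < ρ) (hρ1 : ρ < 1)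
    (hγμ : μ ≤ γ) (hμ : 0 ≤ μ) (hγ : 0 < γ) (hW : 0 ≤ W)
    (hw : ∀ k, ‖w k‖ ≤ W)
    (hdiss : ∀ k : ℕ,
      χ (k + 1) ⬝ᵥ P.mulVec (χ (k + 1)) - ρ * (χ k ⬝ᵥ P.mulVec (χ k))
        - μ * ‖w k‖ ^ 2 ≤ 0)
    (hsupply : ∀ t : ℕ,
      -ρ * (χ t ⬝ᵥ P.mulVec (χ t)) + (ρ / (γ * (1 - ρ))) * ‖z t‖ ^ 2
        - (ρ * (γ - μ) / (1 - ρ)) * ‖w t‖ ^ 2 ≤ 0) :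
    ∀ t : ℕ, ‖z t‖ ≤ γ * W := by
  have hρ1' : 0 < 1 - ρ := by linarith
  have hwsq : ∀ k, ‖w k‖ ^ 2 ≤ W ^ 2 := fun k => by
    nlinarith [hw k, norm_nonneg (w k)]
  -- V_t ≤ μ W² / (1 - ρ)
  have hV : ∀ t : ℕ, χ t ⬝ᵥ P.mulVec (χ t) ≤ μ * W ^ 2 / (1 - ρ) := by
    intro t
    induction t with
    | zero =>
        rw [hχ0]
        simp [dotProduct]
        positivity
    | succ k ih =>
        have h1 := hdiss k
        have h2 := hwsq k
        have h3 : μ * ‖w k‖ ^ 2 ≤ μ * W ^ 2 := by nlinarith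
        have : χ (k + 1) ⬝ᵥ P.mulVec (χ (k + 1)) ≤
            ρ * (μ * W ^ 2 / (1 - ρ)) + μ * W ^ 2 := by nlinarith
        have heq : ρ * (μ * W ^ 2 / (1 - ρ)) + μ * W ^ 2 = μ * W ^ 2 / (1 - ρ) := by
          field_simp
          ring
        linarith [heq ▸ this]
  intro t
  have hs := hsupply t
  have hVt := hV t
  have hwt := hwsq t
  have hz2 : ‖z t‖ ^ 2 ≤ (γ * W) ^ 2 := by
    have key : (ρ / (γ * (1 - ρ))) * ‖z t‖ ^ 2 ≤
        ρ * (μ * W ^ 2 / (1 - ρ)) + (ρ * (γ - μ) / (1 - ρ)) * W ^ 2 := by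
      have hcoef : 0 ≤ ρ * (γ - μ) / (1 - ρ) := div_nonneg (mul_nonneg hρ0.le (by linarith)) hρ1'.le
      nlinarith [mul_le_mul_of_nonneg_left hwt hcoef]
    have hrhs : ρ * (μ * W ^ 2 / (1 - ρ)) + (ρ * (γ - μ) / (1 - ρ)) * W ^ 2
        = (ρ / (γ * (1 - ρ))) * (γ * W) ^ 2 := by
      field_simp
      ring
    rw [hrhs] at key
    have hpos : 0 < ρ / (γ * (1 - ρ)) := by positivity
    exact le_of_mul_le_mul_left key hpos
  nlinarith [norm_nonneg (z t), mul_nonneg hγ.le hW]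
end

section
/- Suppose sequences χ : ℕ → ℝ^n (χ_0 = 0), y : ℕ → ℝ^s, w : ℕ → ℝ^m satisfy for all k: χ_{k+1}ᵀPχ_{k+1} − ρχ_kᵀPχ_k + y_kᵀMy_k − (1−ρ)‖w_k‖² ≤ 0, where ρ ∈ (0,1), P ∈ 𝕊^n, M ∈ 𝕊^s. Suppose further the ρ-hard IQC with terminal cost holds: ∑_{k=0}^{t−1} ρ^{t−1−k} y_kᵀ M y_k + v_t ≥ 0 for all t ≥ 1, where v_t ∈ ℝ is a terminal cost term, and ‖w_k‖ ≤ W for all k. Then χ_tᵀ P χ_t − v_t ≤ W² for all t ∈ ℕ (with v_0 := 0). -/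
open Matrix Finset

/-- Core inequality of Theorem 3 (reachable set bound) with `μ = 1 − ρ`:
the dissipation inequality together with the ρ-hard IQC with terminal cost `v`
and the peak bound `‖w_k‖ ≤ W` yields `χ_tᵀ P χ_t − v_t ≤ W²` for all `t`. -/
theorem reachable_set_core_bound
    {n s m : ℕ} (χ : ℕ → (Fin n → ℝ)) (hχ0 : χ 0 = 0)
    (y : ℕ → (Fin s → ℝ)) (w : ℕ → EuclideanSpace ℝ (Fin m)) (v : ℕ → ℝ)
    (P : Matrix (Fin n) (Fin n) ℝ) (hP : P.IsSymm)
    (M : Matrix (Fin s) (Fin s) ℝ) (hM : M.IsSymm)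
    (ρ W : ℝ) (hρ0 : 0 < ρ) (hρ1 : ρ < 1)
    (hW : 0 ≤ W) (hw : ∀ k, ‖w k‖ ≤ W)
    (hdiss : ∀ k : ℕ,
      χ (k + 1) ⬝ᵥ P.mulVec (χ (k + 1)) - ρ * (χ k ⬝ᵥ P.mulVec (χ k))
        + y k ⬝ᵥ M.mulVec (y k) - (1 - ρ) * ‖w k‖ ^ 2 ≤ 0)
    (hv0 : v 0 = 0)
    (hIQC : ∀ t : ℕ, 1 ≤ t →
      0 ≤ ∑ k ∈ Finset.range t, ρ ^ (t - 1 - k) * (y k ⬝ᵥ M.mulVec (y k)) + v t) :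
    ∀ t : ℕ, χ t ⬝ᵥ P.mulVec (χ t) - v t ≤ W ^ 2 := by
  set a : ℕ → ℝ := fun t => χ t ⬝ᵥ P.mulVec (χ t) with ha
  set q : ℕ → ℝ := fun k => y k ⬝ᵥ M.mulVec (y k) with hq
  set c : ℕ → ℝ := fun k => -q k + (1 - ρ) * ‖w k‖ ^ 2 with hc
  have ha0 : a 0 = 0 := by simp [ha, hχ0]
  -- key: a t ≤ ∑_{k<t} ρ^(t-1-k) * c k
  have key : ∀ t : ℕ, a t ≤ ∑ k ∈ Finset.range t, ρ ^ (t - 1 - k) * c k := by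
    intro t
    induction t with
    | zero => simp [ha0]
    | succ t ih =>
      have step : a (t + 1) ≤ ρ * a t + c t := by
        have := hdiss t
        simp only [ha, hq, hc]
        linarith
      have hsum : ∑ k ∈ Finset.range (t + 1), ρ ^ (t + 1 - 1 - k) * c k
          = ρ * (∑ k ∈ Finset.range t, ρ ^ (t - 1 - k) * c k) + c t := by
        rw [Finset.sum_range_succ, Finset.mul_sum]
        congr 1
        · apply Finset.sum_congr rfl
          intro k hk
          have hk' : k < t := Finset.mem_range.mp hk
          have : t + 1 - 1 - k = (t - 1 - k) + 1 := by omega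
          rw [this, pow_succ]; ring
        · simp
      rw [hsum]
      have := mul_le_mul_of_nonneg_left ih hρ0.le
      linarith
  intro t
  rcases Nat.eq_zero_or_pos t with rfl | ht
  · simp only [hv0, hχ0, Matrix.mulVec_zero, dotProduct_zero, sub_zero]
    positivity
  · have hkey := key t
    have hsplit : ∑ k ∈ Finset.range t, ρ ^ (t - 1 - k) * c k
        = -(∑ k ∈ Finset.range t, ρ ^ (t - 1 - k) * q k)
          + (1 - ρ) * ∑ k ∈ Finset.range t, ρ ^ (t - 1 - k) * ‖w k‖ ^ 2 := by
      simp only [hc]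
      rw [Finset.mul_sum, ← Finset.sum_neg_distrib, ← Finset.sum_add_distrib]
      apply Finset.sum_congr rfl
      intro k _
      ring
    have hiqc := hIQC t ht
    have hgeo : ∑ k ∈ Finset.range t, ρ ^ (t - 1 - k) * ‖w k‖ ^ 2
        ≤ (∑ j ∈ Finset.range t, ρ ^ j) * W ^ 2 := by
      have : ∑ k ∈ Finset.range t, ρ ^ (t - 1 - k) * ‖w k‖ ^ 2
          ≤ ∑ k ∈ Finset.range t, ρ ^ (t - 1 - k) * W ^ 2 := by
        apply Finset.sum_le_sum
        intro k _
        have hwk := hw k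
        have hnn : (0:ℝ) ≤ ‖w k‖ := norm_nonneg _
        have : ‖w k‖ ^ 2 ≤ W ^ 2 := by nlinarith
        nlinarith [pow_pos hρ0 (t - 1 - k)]
      calc _ ≤ ∑ k ∈ Finset.range t, ρ ^ (t - 1 - k) * W ^ 2 := this
        _ = (∑ j ∈ Finset.range t, ρ ^ j) * W ^ 2 := by
            rw [← Finset.sum_mul]
            congr 1
            exact Finset.sum_range_reflect (fun j => ρ ^ j) t
    have hgeo2 : (1 - ρ) * ∑ j ∈ Finset.range t, ρ ^ j = 1 - ρ ^ t := by
      rw [geom_sum_eq (by linarith : ρ ≠ 1)]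
      have : ρ - 1 ≠ 0 := by linarith
      field_simp
      ring
    have hρt : (0:ℝ) ≤ ρ ^ t := (pow_pos hρ0 t).le
    have h1ρ : (0:ℝ) ≤ 1 - ρ := by linarith
    have : (1 - ρ) * ∑ k ∈ Finset.range t, ρ ^ (t - 1 - k) * ‖w k‖ ^ 2
        ≤ (1 - ρ^t) * W ^ 2 := by
      calc (1 - ρ) * ∑ k ∈ Finset.range t, ρ ^ (t - 1 - k) * ‖w k‖ ^ 2
          ≤ (1 - ρ) * ((∑ j ∈ Finset.range t, ρ ^ j) * W ^ 2) :=
            mul_le_mul_of_nonneg_left hgeo h1ρ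
        _ = (1 - ρ^t) * W ^ 2 := by rw [← mul_assoc, hgeo2]
      -- done
    have hWsq : (0:ℝ) ≤ W ^ 2 := by positivity
    nlinarith [mul_nonneg hρt hWsq]
end
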